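/- For any context-free grammar G, the set of simple adjunct trees extractable from derivation trees of G is finite. -/

import Mathlib

/-- Trees whose internal nodes are labeled by nonterminals in `V`
and whose leaves are labeled by elements of `L`. -/
inductive PTree (V L : Type) : Type
  | leaf : L → PTree V L
  | node : V → List (PTree V L) → PTree V L

namespace PTree

variable {V A L : Type}

/-- Leaf alphabet for contexts/adjunct trees: a letter-or-ε leaf, or the hole. -/
abbrev Aug (A : Type) := Option A ⊕ Unit

/-- The root label of a tree: a nonterminal or a leaf label. -/
def rootLabel : PTree V L → V ⊕ L
  | .leaf a => .inr a
  | .node X _ => .inl X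

/-- Set of nonterminals occurring in a tree. -/
def ntSet : PTree V L → Set V
  | .leaf _ => ∅
  | .node X ts => insert X ((ts.attach.map (fun ⟨t, _⟩ => ntSet t)).foldr (· ∪ ·) ∅)

/-- A tree is simple if no nonterminal occurs twice on a root-to-leaf path. -/
def Simple : PTree V L → Prop
  | .leaf _ => True
  | .node X ts => ∀ t ∈ ts, X ∉ ntSet t ∧ Simple t

/-- Number of holes in a context / adjunct tree. -/
def holes : PTree V (Aug A) → ℕ
  | .leaf (.inr _) => 1
  | .leaf (.inl _) => 0
  | .node _ ts => (ts.attach.map (fun ⟨t, _⟩ => holes t)).sum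

/-- Substitute the tree `T` for every hole. -/
def subst (T : PTree V (Option A)) : PTree V (Aug A) → PTree V (Option A)
  | .leaf (.inl a) => .leaf a
  | .leaf (.inr _) => T
  | .node X ts => .node X (ts.attach.map (fun ⟨t, _⟩ => subst T t))

/-- Embed a `(V,A)`-tree into trees with holes (no holes created). -/
def toAug : PTree V (Option A) → PTree V (Aug A)
  | .leaf a => .leaf (.inl a)
  | .node X ts => .node X (ts.attach.map (fun ⟨t, _⟩ => toAug t))

/-- Yield of a `(V,A)`-tree. -/
def yield : PTree V (Option A) → List A
  | .leaf none => []
  | .leaf (some a) => [a]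
  | .node _ ts => (ts.attach.map (fun ⟨t, _⟩ => yield t)).flatten

/-- Yield of a context / adjunct tree, holes contributing `ε`. -/
def yieldA : PTree V (Aug A) → List A
  | .leaf (.inl none) => []
  | .leaf (.inl (some a)) => [a]
  | .leaf (.inr _) => []
  | .node _ ts => (ts.attach.map (fun ⟨t, _⟩ => yieldA t)).flatten

/-- Height of a tree. -/
def height : PTree V L → ℕ
  | .leaf _ => 0
  | .node _ ts => (ts.attach.map (fun ⟨t, _⟩ => height t)).foldr max 0 + 1

/-- Size (number of nodes) of a tree. -/
def tsize : PTree V L → ℕ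
  | .leaf _ => 1
  | .node _ ts => (ts.attach.map (fun ⟨t, _⟩ => tsize t)).sum + 1

end PTree

open PTree

/-- A context-free grammar over `A` with nonterminals `V`:
a finite set of rules `D ⊆ V × (V ∪ A ∪ {ε})⁺` and a start symbol. -/
structure CFG (V A : Type) where
  rules : Set (V × List (V ⊕ Option A))
  rules_fin : rules.Finite
  start : V

variable {V A : Type}

/-- A tree is a valid derivation w.r.t. the rules `D`. -/
inductive IsDeriv (D : Set (V × List (V ⊕ Option A))) : PTree V (Option A) → Prop
  | leaf (a : Option A) : IsDeriv D (.leaf a)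
  | node (X : V) (ts : List (PTree V (Option A))) :
      (X, ts.map rootLabel) ∈ D → (∀ t ∈ ts, IsDeriv D t) → IsDeriv D (.node X ts)

/-- The set `Trees(G)` of derivation trees of `G`. -/
def TreesSet (G : CFG V A) : Set (PTree V (Option A)) :=
  {T | T.rootLabel = .inl G.start ∧ IsDeriv G.rules T}

/-- The language of `G`: yields of derivation trees. -/
def lang (G : CFG V A) : Set (List A) := PTree.yield '' TreesSet G

/-- An adjunct tree is represented by its root nonterminal `X` together with a tree
over `V, A ∪ {X}` (the distinguished leaf `X` being the hole). -/
abbrev AdjT (V A : Type) := V × PTree V (Aug A)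

/-- Wellformedness of an adjunct tree: root node labeled `X`, exactly one `X`-leaf. -/
def WFAdjunct (p : AdjT V A) : Prop :=
  (∃ ts, p.2 = PTree.node p.1 ts) ∧ p.2.holes = 1

/-- A simple adjunct tree: no nonterminal repeats on paths from a child of the root. -/
def SimpleAdjunct (p : AdjT V A) : Prop :=
  ∃ ts, p.2 = PTree.node p.1 ts ∧ ∀ t ∈ ts, Simple t

/-- Root label of a subtree of an adjunct tree with root nonterminal `X`:
the hole leaf is labeled `X`. -/
def augRoot (X : V) : PTree V (Aug A) → V ⊕ Option A
  | .leaf (.inl a) => .inr a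
  | .leaf (.inr _) => .inl X
  | .node Y _ => .inl Y

/-- An adjunct tree is extracted from derivation trees of `D`: every internal
node respects the rules. -/
inductive IsDerivA (D : Set (V × List (V ⊕ Option A))) (X : V) : PTree V (Aug A) → Prop
  | leaf (a : Aug A) : IsDerivA D X (.leaf a)
  | node (Y : V) (ts : List (PTree V (Aug A))) :
      (Y, ts.map (augRoot X)) ∈ D → (∀ t ∈ ts, IsDerivA D X t) → IsDerivA D X (.node Y ts)

/-- `T ⊢_α T'` : `T'` is obtained from `T` by adjoining the adjunct tree `α`
at some occurrence of its root nonterminal. -/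
def Adjoins (α : AdjT V A) (T T' : PTree V (Option A)) : Prop :=
  WFAdjunct α ∧
  ∃ (C : PTree V (Aug A)) (ts : List (PTree V (Option A))),
    C.holes = 1 ∧
    subst (.node α.1 ts) C = T ∧
    subst (subst (.node α.1 ts) α.2) C = T'

/-- `AdjChain L T T'` : `T'` is obtained from `T` by successively adjoining
the adjunct trees listed in `L`. -/
def AdjChain : List (AdjT V A) → PTree V (Option A) → PTree V (Option A) → Prop
  | [], T, T' => T = T'
  | α :: L, T, T' => ∃ T₁, Adjoins α T T₁ ∧ AdjChain L T₁ T'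

/-- `Adj⁺(T,S)` : trees obtained from `T` using exactly the adjunct trees of `S`,
each at least once. -/
def AdjPlus (T : PTree V (Option A)) (S : Set (AdjT V A)) : Set (PTree V (Option A)) :=
  {T' | ∃ L : List (AdjT V A), AdjChain L T T' ∧ {α | α ∈ L} = S}

/-- `Adj(T,S)` : trees obtained from `T` using adjunct trees of `S`, arbitrarily often. -/
def AdjStar (T : PTree V (Option A)) (S : Set (AdjT V A)) : Set (PTree V (Option A)) :=
  {T' | ∃ L : List (AdjT V A), AdjChain L T T' ∧ {α | α ∈ L} ⊆ S}

namespace PTree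
variable [DecidableEq V]

mutual
/-- Find the leftmost `X`-rooted subtree: returns the surrounding context
(with a hole in its place) and the subtree. -/
def extract (X : V) : PTree V (Option A) → Option (PTree V (Aug A) × PTree V (Option A))
  | .leaf _ => none
  | .node Y ts =>
    if Y = X then some (.leaf (.inr ()), .node Y ts)
    else match extractL X ts with
      | none => none
      | some (Cs, sub) => some (.node Y Cs, sub)

/-- List version of `extract`. -/
def extractL (X : V) : List (PTree V (Option A)) → Option (List (PTree V (Aug A)) × PTree V (Option A))
  | [] => none
  | t :: ts =>
    match extract X t with
    | some (C, sub) => some (C :: ts.map toAug, sub)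
    | none =>
      match extractL X ts with
      | some (Cs, sub) => some (toAug t :: Cs, sub)
      | none => none
end

/-- Takahashi's decomposition of a tree into a simple tree and a set of
simple adjunct trees. -/
def decomp : PTree V (Option A) → PTree V (Option A) × Set (AdjT V A)
  | .leaf a => (.leaf a, ∅)
  | .node X ts =>
    let rs := ts.attach.map (fun ⟨t, _⟩ => decomp t)
    let S := (rs.map Prod.snd).foldr (· ∪ ·) ∅
    match extractL X (rs.map Prod.fst) with
    | none => (.node X (rs.map Prod.fst), S)
    | some (Cs, sub) => (sub, insert (X, PTree.node X Cs) S)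

end PTree

/-- The simple trees arising from decompositions of derivation trees. -/
def sTrees (G : CFG V A) [DecidableEq V] : Set (PTree V (Option A)) :=
  {T' | ∃ T ∈ TreesSet G, (decomp T).1 = T'}

/-- The simple adjunct trees arising from decompositions of derivation trees. -/
def sLoops (G : CFG V A) [DecidableEq V] : Set (AdjT V A) :=
  {α | ∃ T ∈ TreesSet G, α ∈ (decomp T).2}

/-- Parikh map. -/
def parikh [DecidableEq A] (w : List A) : A → ℕ := fun a => w.count a

/-- Linear subsets of `ℕ^A`. -/
def IsLinear (S : Set (A → ℕ)) : Prop :=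
  ∃ (v₀ : A → ℕ) (k : ℕ) (v : Fin k → A → ℕ),
    S = {u | ∃ x : Fin k → ℕ, u = v₀ + ∑ i, x i • v i}

/-- Semilinear subsets of `ℕ^A`: finite unions of linear sets. -/
def IsSemilinear (S : Set (A → ℕ)) : Prop :=
  ∃ (n : ℕ) (f : Fin n → Set (A → ℕ)), (∀ i, IsLinear (f i)) ∧ S = ⋃ i, f i

/-
On every root-to-leaf path of a simple tree the nonterminals are distinct, so its height is at most
`|V|`, and a simple adjunct tree has height at most `|V| + 1`. Each node of an extracted tree is
expanded by a rule of the finite set `D`, so its arity is bounded by the longest right-hand side.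
Over the finite alphabets `V` and `A ∪ {ε, X}` there are only finitely many trees of bounded height
and arity.
-/

theorem List.subset_foldr_union {α : Type*} {s : Set α} {l : List (Set α)} (h : s ∈ l) :
    s ⊆ l.foldr (· ∪ ·) ∅ := by
  induction l with
  | nil => simp at h
  | cons a l ih =>
    rcases List.mem_cons.1 h with rfl | h
    · exact Set.subset_union_left
    · exact (ih h).trans Set.subset_union_right

theorem List.finite_length_le_of_forall_mem {α : Type*} {s : Set α} (hs : s.Finite) (N : ℕ) :
    {l : List α | l.length ≤ N ∧ ∀ x ∈ l, x ∈ s}.Finite := by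
  have := hs.to_subtype
  refine ((List.finite_length_le s N).image (List.map Subtype.val)).subset ?_
  rintro l ⟨hlen, hmem⟩
  lift l to List s using hmem
  exact ⟨l, by simpa using hlen, rfl⟩

namespace PTree

variable {V L : Type}

def ArityLE (N : ℕ) : PTree V L → Prop
  | .leaf _ => True
  | .node _ ts => ts.length ≤ N ∧ ∀ t ∈ ts, ArityLE N t

theorem height_node (X : V) (ts : List (PTree V L)) :
    height (node X ts) = (ts.map height).foldr max 0 + 1 := by
  simp [height]

theorem height_lt_height_node {X : V} {ts : List (PTree V L)} {t : PTree V L} (ht : t ∈ ts) :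
    height t < height (node X ts) := by
  rw [height_node]
  exact Nat.lt_succ_of_le (List.le_max_of_le' 0 (List.mem_map_of_mem ht) le_rfl)

theorem height_node_le {X : V} {ts : List (PTree V L)} {h : ℕ}
    (hts : ∀ t ∈ ts, height t ≤ h) :
    height (node X ts) ≤ h + 1 := by
  rw [height_node, Nat.add_le_add_iff_right]
  exact List.max_le_of_forall_le _ _ (by simpa using hts)

theorem ntSet_node (X : V) (ts : List (PTree V L)) :
    ntSet (node X ts) = insert X ((ts.map ntSet).foldr (· ∪ ·) ∅) := by
  simp [ntSet]

theorem ntSet_subset_ntSet_node {X : V} {ts : List (PTree V L)} {t : PTree V L} (ht : t ∈ ts) :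
    ntSet t ⊆ ntSet (node X ts) := by
  rw [ntSet_node]
  exact (List.subset_foldr_union (List.mem_map_of_mem ht)).trans (Set.subset_insert _ _)

theorem height_le_ncard_ntSet_of_simple [Finite V] :
    ∀ {t : PTree V L}, Simple t → height t ≤ (ntSet t).ncard
  | .leaf _, _ => by simp [height]
  | .node X ts, hs => by
    simp only [Simple] at hs
    have hX : X ∈ ntSet (node X ts) := by rw [ntSet_node]; exact Set.mem_insert _ _
    have hpos : 0 < (ntSet (node X ts)).ncard := (Set.ncard_pos (Set.toFinite _)).2 ⟨X, hX⟩
    have hchild : ∀ t ∈ ts, height t ≤ (ntSet (node X ts)).ncard - 1 := fun t ht => calc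
      height t ≤ (ntSet t).ncard := height_le_ncard_ntSet_of_simple (hs t ht).2
      _ ≤ (ntSet (node X ts) \ {X}).ncard :=
        Set.ncard_le_ncard fun y hy =>
          ⟨ntSet_subset_ntSet_node ht hy, fun hyX => (hs t ht).1 (hyX ▸ hy)⟩
      _ = (ntSet (node X ts)).ncard - 1 := Set.ncard_sdiff_singleton_of_mem hX
    have := height_node_le (X := X) hchild
    omega
termination_by t => sizeOf t
decreasing_by have := List.sizeOf_lt_of_mem ‹_ ∈ ts›; simp; omega

theorem height_le_card_of_simple [Finite V] {t : PTree V L} (h : Simple t) :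
    height t ≤ Nat.card V :=
  (height_le_ncard_ntSet_of_simple h).trans (Set.ncard_le_card _)

theorem finite_setOf_height_le_arityLE [Finite V] [Finite L] (N h : ℕ) :
    {t : PTree V L | height t ≤ h ∧ ArityLE N t}.Finite := by
  induction h with
  | zero =>
    refine (Set.finite_range leaf).subset ?_
    rintro (a | ⟨X, ts⟩) ⟨hh, -⟩
    · exact ⟨a, rfl⟩
    · rw [height_node] at hh; omega
  | succ h ih =>
    refine ((Set.finite_range leaf).union ((Set.finite_univ.prod
      (List.finite_length_le_of_forall_mem ih N)).image fun p => node p.1 p.2)).subset ?_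
    rintro (a | ⟨X, ts⟩) ⟨hh, hN⟩
    · exact Or.inl ⟨a, rfl⟩
    · simp only [ArityLE] at hN
      obtain ⟨hlen, hts⟩ := hN
      refine Or.inr ⟨(X, ts), ⟨trivial, hlen, fun t ht => ⟨?_, hts t ht⟩⟩, rfl⟩
      have := height_lt_height_node (X := X) (ts := ts) ht
      omega

end PTree

theorem IsDerivA.arityLE {D : Set (V × List (V ⊕ Option A))} {X : V} {N : ℕ}
    (hN : ∀ r ∈ D, r.2.length ≤ N) {t : PTree V (Aug A)} (ht : IsDerivA D X t) :
    ArityLE N t := by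
  induction ht with
  | leaf => simp only [ArityLE]
  | node Y ts hrule _ ih =>
    simp only [ArityLE]
    exact ⟨by simpa using hN _ hrule, ih⟩

/-- For any context-free grammar `G`, the set of simple adjunct trees
extractable from derivation trees of `G` is finite. -/
theorem simple_adjuncts_finite {V A : Type} [Finite V] [Finite A] (G : CFG V A) :
    {α : AdjT V A | WFAdjunct α ∧ IsDerivA G.rules α.1 α.2 ∧ SimpleAdjunct α}.Finite := by
  obtain ⟨N, hN⟩ : ∃ N, ∀ r ∈ G.rules, r.2.length ≤ N :=
    (G.rules_fin.image fun r => r.2.length).bddAbove.imp fun N hN r hr => hN ⟨r, hr, rfl⟩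
  refine (Set.finite_univ.prod (finite_setOf_height_le_arityLE N (Nat.card V + 1))).subset ?_
  rintro ⟨X, T⟩ ⟨-, hderiv, ts, hT, hsimple⟩
  obtain rfl : T = node X ts := hT
  exact ⟨trivial, height_node_le fun t ht => height_le_card_of_simple (hsimple t ht),
    hderiv.arityLE hN⟩
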